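/- arXiv:1706.04998 — 2 statements merged into one kernel-verified Lean document; each statement's English description precedes it below -/
import Mathlib

section
/- Let U be the harmonic-type function with boundary values (x0,x1,x2). Then for all n ≥ 0, B_n(U) = (3/5)ⁿ · ((x0−x1)² + (x1−x2)² + (x0−x2)²). -/
open MeasureTheory Filter Set
open scoped ENNReal NNReal Classical

noncomputable section

namespace SG

/-- The three vertices `p₀ = (0,0)`, `p₁ = (1,0)`, `p₂ = (1/2, √3/2)` viewed in `ℂ`. -/
def p : Fin 3 → ℂ := ![0, 1, 1/2 + (Real.sqrt 3 / 2) * Complex.I]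

/-- The three contraction maps `fᵢ x = (x + pᵢ)/2`. -/
def f (i : Fin 3) (x : ℂ) : ℂ := (x + p i) / 2

/-- `K` is the Sierpinski gasket: the (unique) nonempty compact set with
`K = f₀(K) ∪ f₁(K) ∪ f₂(K)`. -/
def IsSG (K : Set ℂ) : Prop :=
  K.Nonempty ∧ IsCompact K ∧ K = f 0 '' K ∪ f 1 '' K ∪ f 2 '' K

/-- `α = log 3 / log 2`. -/
def alpha : ℝ := Real.log 3 / Real.log 2

/-- `β* = log 5 / log 2`. -/
def betastar : ℝ := Real.log 5 / Real.log 2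

/-- The normalized `α`-dimensional Hausdorff measure restricted to `K`. -/
def nu (K : Set ℂ) : Measure ℂ :=
  ((Measure.hausdorffMeasure alpha : Measure ℂ) K)⁻¹ •
    (Measure.hausdorffMeasure alpha : Measure ℂ).restrict K

/-- `f_w` for a finite word `w` over `{0,1,2}` (empty word gives the identity). -/
def fwl : List (Fin 3) → ℂ → ℂ
  | [] => id
  | i :: t => f i ∘ fwl t

/-- `f_w` for a word `w ∈ W_n = {0,1,2}ⁿ`. -/
def fw {n : ℕ} (w : Fin n → Fin 3) : ℂ → ℂ := fwl (List.ofFn w)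

/-- The cell `K_w = f_w(K)`. -/
def Kw (K : Set ℂ) {n : ℕ} (w : Fin n → Fin 3) : Set ℂ := fw w '' K

/-- Adjacency `w⁽¹⁾ ∼ₙ w⁽²⁾`: distinct words with intersecting cells. -/
def Adj (K : Set ℂ) {n : ℕ} (w1 w2 : Fin n → Fin 3) : Prop :=
  w1 ≠ w2 ∧ (Kw K w1 ∩ Kw K w2).Nonempty

/-- `Pₙu(w) = ∫_K u(f_w(x)) ν(dx)`. -/
def P (K : Set ℂ) {n : ℕ} (u : ℂ → ℝ) (w : Fin n → Fin 3) : ℝ :=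
  ∫ x, u (fw w x) ∂(nu K)

/-- `Aₙ(u)`: sum over unordered adjacent pairs in `W_n` of `(Pₙu(w⁽¹⁾) − Pₙu(w⁽²⁾))²`
(written as half the sum over ordered pairs). -/
def A (K : Set ℂ) (n : ℕ) (u : ℂ → ℝ) : ℝ :=
  (1/2) * ∑ w1 : Fin n → Fin 3, ∑ w2 : Fin n → Fin 3,
    if Adj K w1 w2 then (P K u w1 - P K u w2)^2 else 0

/-- The remaining index of `{0,1,2}` besides `i` and `j` (when `i ≠ j`):
since `0+1+2 = 0` in `Fin 3`, it is `-(i+j)`. -/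
def other (i j : Fin 3) : Fin 3 := -(i + j)

/-- `U : K → ℝ` is harmonic-type with boundary values `(x0, x1, x2)`:
continuous on `K`, `U(pᵢ) = xᵢ`, and for every finite word `w` and distinct `i, j`
(with `k` the remaining index),
`U(f_w((pᵢ+pⱼ)/2)) = (2 U(f_w(pᵢ)) + 2 U(f_w(pⱼ)) + U(f_w(p_k)))/5`. -/
def IsHarm (K : Set ℂ) (x0 x1 x2 : ℝ) (U : ℂ → ℝ) : Prop :=
  ContinuousOn U K ∧ U (p 0) = x0 ∧ U (p 1) = x1 ∧ U (p 2) = x2 ∧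
  ∀ (w : List (Fin 3)) (i j : Fin 3), i ≠ j →
    U (fwl w ((p i + p j) / 2)) =
      (2 * U (fwl w (p i)) + 2 * U (fwl w (p j)) + U (fwl w (p (other i j)))) / 5

/-- `Bₙ(u) = Σ_{w ∈ Wₙ}` of the sum over the three unordered pairs of distinct
vertices of `V_w = {f_w(p₀), f_w(p₁), f_w(p₂)}` of squared differences. -/
def B (n : ℕ) (u : ℂ → ℝ) : ℝ :=
  ∑ w : Fin n → Fin 3,
    ((u (fw w (p 0)) - u (fw w (p 1)))^2 + (u (fw w (p 1)) - u (fw w (p 2)))^2 +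
      (u (fw w (p 0)) - u (fw w (p 2)))^2)

def HasHarmonicMidpoints (u : ℂ → ℝ) : Prop :=
  ∀ (w : List (Fin 3)) (i j : Fin 3), i ≠ j →
    u (fwl w ((p i + p j) / 2)) =
      (2 * u (fwl w (p i)) + 2 * u (fwl w (p j)) + u (fwl w (p (other i j)))) / 5

lemma fw_cons {n : ℕ} (i : Fin 3) (w : Fin n → Fin 3) :
    fw (Fin.cons i w) = f i ∘ fw w := by
  simp only [fw, List.ofFn_succ, Fin.cons_zero, Fin.cons_succ, fwl]

lemma f_apply_p (i j : Fin 3) : f i (p j) = (p i + p j) / 2 := by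
  rw [f, add_comm]

lemma HasHarmonicMidpoints.comp_f {u : ℂ → ℝ} (hu : HasHarmonicMidpoints u) (i : Fin 3) :
    HasHarmonicMidpoints (u ∘ f i) :=
  fun w j k hjk => hu (i :: w) j k hjk

lemma HasHarmonicMidpoints.apply_midpoint {u : ℂ → ℝ} (hu : HasHarmonicMidpoints u)
    {i j : Fin 3} (hij : i ≠ j) :
    u ((p i + p j) / 2) = (2 * u (p i) + 2 * u (p j) + u (p (other i j))) / 5 :=
  hu [] i j hij

lemma B_zero (u : ℂ → ℝ) :
    B 0 u = (u (p 0) - u (p 1))^2 + (u (p 1) - u (p 2))^2 + (u (p 0) - u (p 2))^2 := by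
  simp [B, fw, fwl]

lemma B_succ (n : ℕ) (u : ℂ → ℝ) : B (n + 1) u = ∑ i : Fin 3, B n (u ∘ f i) := by
  rw [B, ← (Fin.consEquiv fun _ : Fin (n + 1) => Fin 3).sum_comp, Fintype.sum_prod_type]
  simp only [Fin.consEquiv, Equiv.coe_fn_mk, fw_cons, B, Function.comp_apply]

/-- The renormalization identity of the gasket: `u ∘ f i` sees the `i`-th level-one cell, and the
`(2, 2, 1)/5` midpoint rule is exactly what makes its energies sum to `3/5` of the level-zero one. -/
lemma sum_B_zero_comp_f {u : ℂ → ℝ} (hu : HasHarmonicMidpoints u) :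
    ∑ i : Fin 3, B 0 (u ∘ f i) = 3 / 5 * B 0 u := by
  have h01 : u ((p 0 + p 1) / 2) = (2 * u (p 0) + 2 * u (p 1) + u (p 2)) / 5 :=
    hu.apply_midpoint (by decide)
  have h02 : u ((p 0 + p 2) / 2) = (2 * u (p 0) + 2 * u (p 2) + u (p 1)) / 5 :=
    hu.apply_midpoint (by decide)
  have h12 : u ((p 1 + p 2) / 2) = (2 * u (p 1) + 2 * u (p 2) + u (p 0)) / 5 :=
    hu.apply_midpoint (by decide)
  have hp : ∀ i : Fin 3, (p i + p i) / 2 = p i := fun i => by ring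
  simp only [Fin.sum_univ_three, B_zero, Function.comp_apply, f_apply_p, hp, add_comm (p 1) (p 0),
    add_comm (p 2) (p 0), add_comm (p 2) (p 1), h01, h02, h12]
  ring

lemma B_eq_of_hasHarmonicMidpoints {u : ℂ → ℝ} (hu : HasHarmonicMidpoints u) (n : ℕ) :
    B n u = (3 / 5)^n * B 0 u := by
  induction n generalizing u with
  | zero => simp
  | succ n ih =>
    simp only [B_succ, ih (hu.comp_f _), ← Finset.mul_sum, sum_B_zero_comp_f hu]
    ring

theorem statement6_general (K : Set ℂ) (x0 x1 x2 : ℝ) (U : ℂ → ℝ)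
    (hU : IsHarm K x0 x1 x2 U) (n : ℕ) :
    B n U = (3/5)^n * ((x0 - x1)^2 + (x1 - x2)^2 + (x0 - x2)^2) := by
  obtain ⟨-, h0, h1, h2, hmid⟩ := hU
  rw [B_eq_of_hasHarmonicMidpoints hmid, B_zero, h0, h1, h2]

theorem statement6 (K : Set ℂ) (hK : IsSG K) (x0 x1 x2 : ℝ) (U : ℂ → ℝ)
    (hU : IsHarm K x0 x1 x2 U) (n : ℕ) :
    B n U = (3/5)^n * ((x0 - x1)^2 + (x1 - x2)^2 + (x0 - x2)^2) :=
  statement6_general K x0 x1 x2 U hU n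

end SG
end
end

section
/- The family of harmonic-type functions separates points of K: for all x, y ∈ K with x ≠ y, there exist x0, x1, x2 ∈ ℝ and a harmonic-type function U : K → ℝ with boundary values (x0,x1,x2) such that U(x) ≠ U(y). -/
open MeasureTheory Filter Set
open scoped ENNReal NNReal Classical

noncomputable section

/-!
The three harmonic functions whose boundary values are the standard basis vectors are bundled
into one map `harmonicBasis : ℂ → Fin 3 → ℝ` with values in the standard simplex `Δ`,
characterised by `harmonicBasis (f a z) = harmMatrix a *ᵥ harmonicBasis z`, where column `k` of
`harmMatrix a` holds the values at `f a (p k)` prescribed by the `2-2-1` rule. It is the uniform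
limit of iterating this self-similarity relation, which is a `3/5`-contraction for the sup
metric; the iterates stay continuous on `K` because the cells `f a '' K` meet only at vertices,
where the relation is consistent.

It is injective on `K`: two distinct points with the same value cannot lie in distinct cells,
since the simplices `harmMatrix a *ᵥ Δ` meet only at single vertices whose fibres are single
points; so they lie in one cell, and their preimages are such a pair at twice the distance, which
a bounded set cannot sustain. A coordinate in which the values at `x` and `y` differ is then the
required harmonic function.
-/

lemma IsCompact.subset_of_subset_iUnion_image {α ι : Type*} [MetricSpace α] [ProperSpace α]
    {K T : Set α} {φ : ι → α → α} {c : ℝ} (hc : c < 1)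
    (hφ : ∀ i x y, dist (φ i x) (φ i y) ≤ c * dist x y) (hK : IsCompact K)
    (hKφ : K ⊆ ⋃ i, φ i '' K) (hT : IsClosed T) (hTne : T.Nonempty)
    (hφT : ∀ i, MapsTo (φ i) T T) : K ⊆ T := by
  rcases K.eq_empty_or_nonempty with rfl | hKne
  · exact empty_subset T
  obtain ⟨x, hxK, hmax⟩ :=
    hK.exists_isMaxOn hKne (Metric.continuous_infDist_pt T).continuousOn
  obtain ⟨i, w, hwK, rfl⟩ := mem_iUnion.1 (hKφ hxK)
  obtain ⟨t, htT, hwt⟩ := hT.exists_infDist_eq_dist hTne w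
  have hshrink : Metric.infDist (φ i w) T ≤ c * Metric.infDist w T :=
    hwt ▸ (Metric.infDist_le_dist_of_mem (hφT i htT)).trans (hφ i w t)
  have hle : Metric.infDist w T ≤ Metric.infDist (φ i w) T := hmax hwK
  have hzero : Metric.infDist (φ i w) T ≤ 0 := by
    have := Metric.infDist_nonneg (x := w) (s := T)
    rcases le_or_gt c 0 with hc0 | hc0 <;> nlinarith
  intro z hz
  exact (hT.mem_iff_infDist_zero hTne).2
    (le_antisymm ((hmax hz).trans hzero) Metric.infDist_nonneg)

lemma eq_of_forall_dist_doubling {α : Type*} [MetricSpace α] {S : Set α}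
    (hS : Bornology.IsBounded S) {R : α → α → Prop} (hRS : ∀ x y, R x y → x ∈ S ∧ y ∈ S)
    (hR : ∀ x y, R x y → x ≠ y → ∃ x' y', R x' y' ∧ 2 * dist x y ≤ dist x' y')
    {x y : α} (hxy : R x y) : x = y := by
  obtain ⟨C, hC⟩ := Metric.isBounded_iff.1 hS
  by_contra hne
  have hpos : 0 < dist x y := dist_pos.2 hne
  have hgrow (n : ℕ) : ∃ x' y', R x' y' ∧ 2 ^ n * dist x y ≤ dist x' y' := by
    induction n with
    | zero => exact ⟨x, y, hxy, by rw [pow_zero, one_mul]⟩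
    | succ n ih =>
      obtain ⟨x', y', hR', hd⟩ := ih
      have hne' : x' ≠ y' := dist_pos.1 (lt_of_lt_of_le (by positivity) hd)
      obtain ⟨x'', y'', hR'', hd'⟩ := hR x' y' hR' hne'
      exact ⟨x'', y'', hR'', by rw [pow_succ]; linarith⟩
  obtain ⟨n, hn⟩ := pow_unbounded_of_one_lt (C / dist x y) one_lt_two
  obtain ⟨x', y', hR', hd⟩ := hgrow n
  have hle := hC (hRS _ _ hR').1 (hRS _ _ hR').2
  rw [div_lt_iff₀ hpos] at hn
  linarith

namespace SG

open Matrix Topology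

local notation "Δ" => stdSimplex ℝ (Fin 3)

/-- Column `k` holds the values of the three harmonic basis functions at `f a (p k)`. -/
def harmMatrix (a : Fin 3) : Matrix (Fin 3) (Fin 3) ℝ :=
  Matrix.of fun j k =>
    if k = a then (if j = a then 1 else 0) else if j = a ∨ j = k then 2/5 else 1/5

lemma harmMatrix_mulVec_mem {a : Fin 3} {u : Fin 3 → ℝ} (hu : u ∈ Δ) :
    harmMatrix a *ᵥ u ∈ Δ := by
  obtain ⟨hnn, hsum⟩ := hu
  have := hnn 0; have := hnn 1; have := hnn 2
  simp only [Fin.sum_univ_three] at hsum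
  refine ⟨fun j => ?_, ?_⟩
  · fin_cases a <;> fin_cases j <;>
      simp [harmMatrix, mulVec, dotProduct, Fin.sum_univ_three] <;> positivity
  · fin_cases a <;> simp [harmMatrix, mulVec, dotProduct, Fin.sum_univ_three] <;> linarith

lemma harmMatrix_mulVec_single_self (a : Fin 3) :
    harmMatrix a *ᵥ Pi.single a 1 = Pi.single a 1 := by
  ext j
  fin_cases a <;> fin_cases j <;> simp [harmMatrix, mulVec, dotProduct, Fin.sum_univ_three]

lemma harmMatrix_mulVec_single_of_ne {i j : Fin 3} (h : i ≠ j) :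
    harmMatrix i *ᵥ Pi.single j 1 =
      (1/5 : ℝ) • ((2 : ℝ) • Pi.single i 1 + (2 : ℝ) • Pi.single j 1 +
        Pi.single (other i j) 1) := by
  ext k
  fin_cases i <;> fin_cases j <;> fin_cases k <;>
    simp (config := {decide := true}) [harmMatrix, mulVec, dotProduct, other, Pi.single_apply]
      at h ⊢ <;> norm_num

lemma harmMatrix_mulVec_single_comm (a b : Fin 3) :
    harmMatrix a *ᵥ Pi.single b 1 = harmMatrix b *ᵥ Pi.single a 1 := by
  rcases eq_or_ne a b with rfl | h
  · rfl
  rw [harmMatrix_mulVec_single_of_ne h, harmMatrix_mulVec_single_of_ne h.symm, other, other,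
    add_comm b a, add_comm ((2 : ℝ) • Pi.single a 1)]

lemma harmMatrix_mulVec_injective (a : Fin 3) : Function.Injective (harmMatrix a *ᵥ ·) := by
  refine mulVec_injective_iff_isUnit.2 ((isUnit_iff_isUnit_det _).2 (IsUnit.mk0 _ ?_))
  fin_cases a <;> simp [det_fin_three, harmMatrix] <;> norm_num

lemma dist_harmMatrix_mulVec_le (a : Fin 3) {u v : Fin 3 → ℝ} (hu : u ∈ Δ) (hv : v ∈ Δ) :
    dist (harmMatrix a *ᵥ u) (harmMatrix a *ᵥ v) ≤ 3/5 * dist u v := by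
  have hsum : (u 0 - v 0) + (u 1 - v 1) + (u 2 - v 2) = 0 := by
    have := hu.2; have := hv.2; simp only [Fin.sum_univ_three] at *; linarith
  have hw (k : Fin 3) : |u k - v k| ≤ dist u v := by
    rw [← Real.dist_eq]; exact dist_le_pi_dist u v k
  have := hw 0; have := hw 1; have := hw 2
  rw [abs_le] at *
  refine (dist_pi_le_iff (by positivity)).2 fun j => ?_
  rw [Real.dist_eq, abs_le]
  fin_cases a <;> fin_cases j <;> simp [harmMatrix, mulVec, dotProduct, Fin.sum_univ_three] <;>
    constructor <;> linarith

lemma eq_single_of_harmMatrix_mulVec_eq {a b : Fin 3} (hab : a ≠ b) {u v : Fin 3 → ℝ}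
    (hu : u ∈ Δ) (hv : v ∈ Δ) (h : harmMatrix a *ᵥ u = harmMatrix b *ᵥ v) :
    v = Pi.single a 1 := by
  have ha := congrFun h a
  obtain ⟨hu0, hus⟩ := hu; obtain ⟨hv0, hvs⟩ := hv
  simp only [Fin.sum_univ_three] at hus hvs
  have := hu0 0; have := hu0 1; have := hu0 2; have := hv0 0; have := hv0 1; have := hv0 2
  ext k
  fin_cases a <;> fin_cases b <;> fin_cases k <;>
    simp [harmMatrix, mulVec, dotProduct, Fin.sum_univ_three] at hab ha ⊢ <;> linarith

/-- Barycentric coordinates with respect to `p 0`, `p 1`, `p 2`. -/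
def bary (z : ℂ) : Fin 3 → ℝ :=
  ![1 - z.re - z.im / √3, z.re - z.im / √3, 2 * z.im / √3]

lemma continuous_bary : Continuous bary := by
  refine continuous_pi fun i => ?_
  fin_cases i <;> simp only [bary] <;> fun_prop

lemma bary_injective : Function.Injective bary := by
  intro z w h
  have h1 : z.re - z.im / √3 = w.re - w.im / √3 := congrFun h 1
  have h2 : 2 * z.im / √3 = 2 * w.im / √3 := congrFun h 2
  have him : z.im = w.im := by field_simp at h2; linarith
  exact Complex.ext (by rw [him] at h1; linarith) him

lemma bary_f (a : Fin 3) (z : ℂ) : bary (f a z) = (1/2 : ℝ) • (bary z + Pi.single a 1) := by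
  have hs : (√3 : ℝ) ≠ 0 := by positivity
  ext k
  simp only [Pi.smul_apply, Pi.add_apply, smul_eq_mul]
  fin_cases a <;> fin_cases k <;> simp [bary, f, p] <;> field_simp <;> ring

lemma f_p_self (i : Fin 3) : f i (p i) = p i := by unfold f; ring

lemma bary_p (i : Fin 3) : bary (p i) = Pi.single i 1 := by
  have h := bary_f i (p i)
  rw [f_p_self] at h
  ext k
  have hk := congrFun h k
  simp only [Pi.smul_apply, Pi.add_apply, smul_eq_mul] at hk
  linarith

def triangle : Set ℂ := bary ⁻¹' Δ

lemma isClosed_triangle : IsClosed triangle :=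
  (isClosed_stdSimplex ℝ (Fin 3)).preimage continuous_bary

lemma p_mem_triangle (i : Fin 3) : p i ∈ triangle := by
  rw [triangle, mem_preimage, bary_p]
  exact single_mem_stdSimplex ℝ i

lemma f_mem_triangle (a : Fin 3) {z : ℂ} (hz : z ∈ triangle) : f a z ∈ triangle := by
  rw [triangle, mem_preimage, bary_f, smul_add]
  exact convex_stdSimplex ℝ (Fin 3) hz (single_mem_stdSimplex ℝ a) (by norm_num) (by norm_num)
    (by norm_num)

lemma p_add_p_div_two (i j : Fin 3) : (p i + p j) / 2 = f i (p j) := by unfold f; ring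

lemma fwl_mem_triangle (w : List (Fin 3)) {z : ℂ} (hz : z ∈ triangle) : fwl w z ∈ triangle := by
  induction w with
  | nil => exact hz
  | cons a w ih => exact f_mem_triangle a ih

lemma continuous_f (a : Fin 3) : Continuous (f a) := by unfold f; fun_prop

lemma dist_f (a : Fin 3) (z w : ℂ) : dist (f a z) (f a w) = dist z w / 2 := by
  rw [Complex.dist_eq, Complex.dist_eq, show f a z - f a w = (z - w) / 2 by unfold f; ring,
    norm_div, Complex.norm_two]

def fInv (a : Fin 3) (x : ℂ) : ℂ := 2 * x - p a

lemma continuous_fInv (a : Fin 3) : Continuous (fInv a) := by unfold fInv; fun_prop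

lemma f_fInv (a : Fin 3) (x : ℂ) : f a (fInv a x) = x := by unfold f fInv; ring

lemma fInv_f (a : Fin 3) (z : ℂ) : fInv a (f a z) = z := by unfold f fInv; ring

lemma eq_single_of_half_add_single_eq {a b : Fin 3} (hab : a ≠ b) {u v : Fin 3 → ℝ}
    (hu : u ∈ Δ) (hv : v ∈ Δ)
    (h : (1/2 : ℝ) • (u + Pi.single a 1) = (1/2 : ℝ) • (v + Pi.single b 1)) :
    u = Pi.single b 1 := by
  have hb := congrFun h b
  obtain ⟨hu0, hus⟩ := hu; obtain ⟨hv0, hvs⟩ := hv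
  simp only [Fin.sum_univ_three] at hus hvs
  have := hu0 0; have := hu0 1; have := hu0 2; have := hv0 0; have := hv0 1; have := hv0 2
  ext k
  fin_cases a <;> fin_cases b <;> fin_cases k <;> simp at hab hb ⊢ <;> linarith

lemma fInv_eq_p_of_mem {a b : Fin 3} (hab : a ≠ b) {x : ℂ} (ha : fInv a x ∈ triangle)
    (hb : fInv b x ∈ triangle) : fInv a x = p b := by
  apply bary_injective
  rw [bary_p]
  refine eq_single_of_half_add_single_eq hab ha hb ?_
  rw [← bary_f, ← bary_f, f_fInv, f_fInv]

lemma IsSG.eq_iUnion {K : Set ℂ} (hK : IsSG K) : K = ⋃ a, f a '' K := by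
  conv_lhs => rw [hK.2.2]
  ext z
  simp [Fin.exists_fin_succ, or_assoc]

lemma IsSG.subset_triangle {K : Set ℂ} (hK : IsSG K) : K ⊆ triangle :=
  IsCompact.subset_of_subset_iUnion_image (φ := f) (c := 1/2) (by norm_num)
    (fun a z w => by rw [dist_f]; linarith) hK.2.1 hK.eq_iUnion.subset isClosed_triangle
    ⟨p 0, p_mem_triangle 0⟩ (fun a _ hz => f_mem_triangle a hz)

structure Admissible (L : ℂ → Fin 3 → ℝ) : Prop where
  mem_stdSimplex : ∀ x, L x ∈ Δ
  apply_p : ∀ i, L (p i) = Pi.single i 1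

/-- On the cell `f a '' triangle` this is `harmMatrix a ∘ L ∘ (f a)⁻¹`; the value off the three
cells is irrelevant. -/
def step (L : ℂ → Fin 3 → ℝ) (x : ℂ) : Fin 3 → ℝ :=
  if h : ∃ a, fInv a x ∈ triangle then harmMatrix h.choose *ᵥ L (fInv h.choose x)
  else Pi.single 0 1

lemma step_eq_of_fInv_mem {L : ℂ → Fin 3 → ℝ} (hL : ∀ i, L (p i) = Pi.single i 1) {a : Fin 3}
    {x : ℂ} (ha : fInv a x ∈ triangle) : step L x = harmMatrix a *ᵥ L (fInv a x) := by
  have h : ∃ b, fInv b x ∈ triangle := ⟨a, ha⟩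
  rw [step, dif_pos h]
  rcases eq_or_ne h.choose a with hba | hba
  · rw [hba]
  rw [fInv_eq_p_of_mem hba h.choose_spec ha, fInv_eq_p_of_mem hba.symm ha h.choose_spec, hL, hL,
    harmMatrix_mulVec_single_comm]

lemma step_f {L : ℂ → Fin 3 → ℝ} (hL : ∀ i, L (p i) = Pi.single i 1) (a : Fin 3) {z : ℂ}
    (hz : z ∈ triangle) : step L (f a z) = harmMatrix a *ᵥ L z := by
  rw [step_eq_of_fInv_mem hL (by rwa [fInv_f]), fInv_f]

lemma Admissible.step {L : ℂ → Fin 3 → ℝ} (hL : Admissible L) : Admissible (step L) where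
  mem_stdSimplex x := by
    unfold SG.step
    split_ifs
    · exact harmMatrix_mulVec_mem (hL.mem_stdSimplex _)
    · exact single_mem_stdSimplex ℝ 0
  apply_p i := by
    rw [← f_p_self, step_f hL.apply_p i (p_mem_triangle i), hL.apply_p,
      harmMatrix_mulVec_single_self]

lemma dist_step_le {L L' : ℂ → Fin 3 → ℝ} (hL : ∀ y, L y ∈ Δ) (hL' : ∀ y, L' y ∈ Δ) {C : ℝ}
    (hC : ∀ y, dist (L y) (L' y) ≤ C) (x : ℂ) : dist (step L x) (step L' x) ≤ 3/5 * C := by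
  unfold step
  split_ifs
  · exact (dist_harmMatrix_mulVec_le _ (hL _) (hL' _)).trans
      (by gcongr; exact hC _)
  · rw [dist_self]
    have := dist_nonneg.trans (hC x)
    positivity

def approx (n : ℕ) : ℂ → Fin 3 → ℝ :=
  step^[n] (triangle.piecewise bary fun _ => Pi.single 0 1)

lemma approx_zero_of_mem {x : ℂ} (hx : x ∈ triangle) : approx 0 x = bary x := by
  rw [approx, Function.iterate_zero_apply, piecewise_eq_of_mem _ _ _ hx]

lemma approx_succ (n : ℕ) : approx (n + 1) = step (approx n) :=
  Function.iterate_succ_apply' step n _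

lemma admissible_approx (n : ℕ) : Admissible (approx n) := by
  induction n with
  | zero =>
    refine ⟨fun x => ?_, fun i => by rw [approx_zero_of_mem (p_mem_triangle i), bary_p]⟩
    by_cases hx : x ∈ triangle
    · rw [approx_zero_of_mem hx]
      exact hx
    · rw [approx, Function.iterate_zero_apply, piecewise_eq_of_notMem _ _ _ hx]
      exact single_mem_stdSimplex ℝ 0
  | succ n ih => rw [approx_succ]; exact ih.step

lemma dist_approx_succ_le (n : ℕ) (x : ℂ) :
    dist (approx (n + 1) x) (approx n x) ≤ (3/5) ^ n := by
  induction n generalizing x with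
  | zero =>
    rw [pow_zero]
    exact (Metric.dist_le_diam_of_mem (bounded_stdSimplex (Fin 3))
      ((admissible_approx 1).mem_stdSimplex x) ((admissible_approx 0).mem_stdSimplex x)).trans
      diam_stdSimplex_le
  | succ n ih =>
    have h := dist_step_le (admissible_approx _).mem_stdSimplex
      (admissible_approx _).mem_stdSimplex ih x
    rwa [← approx_succ, ← approx_succ, ← pow_succ'] at h

def harmonicBasis (x : ℂ) : Fin 3 → ℝ := limUnder atTop (approx · x)

lemma tendsto_approx (x : ℂ) : Tendsto (approx · x) atTop (𝓝 (harmonicBasis x)) :=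
  (cauchySeq_of_le_geometric (3/5) 1 (by norm_num)
    fun n => by simpa [dist_comm] using dist_approx_succ_le n x).tendsto_limUnder

lemma tendstoUniformly_approx : TendstoUniformly approx harmonicBasis atTop := by
  have hbound (n : ℕ) (x : ℂ) : dist (harmonicBasis x) (approx n x) ≤ 5/2 * (3/5) ^ n := by
    rw [dist_comm]
    convert dist_le_of_le_geometric_of_tendsto (3/5) 1 (by norm_num)
      (fun n => by simpa [dist_comm] using dist_approx_succ_le n x) (tendsto_approx x) n using 1
    ring
  have hlim : Tendsto (fun n : ℕ => 5/2 * (3/5 : ℝ) ^ n) atTop (𝓝 0) := by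
    simpa using (tendsto_pow_atTop_nhds_zero_of_lt_one (r := (3/5 : ℝ)) (by norm_num)
      (by norm_num)).const_mul (5/2 : ℝ)
  refine Metric.tendstoUniformly_iff.2 fun ε hε => ?_
  filter_upwards [hlim.eventually (gt_mem_nhds hε)] with n hn x
  exact (hbound n x).trans_lt hn

lemma continuous_harmMatrix_mulVec (a : Fin 3) : Continuous (harmMatrix a *ᵥ ·) :=
  continuous_const.matrix_mulVec continuous_id

lemma admissible_harmonicBasis : Admissible harmonicBasis where
  mem_stdSimplex x := (isClosed_stdSimplex ℝ (Fin 3)).mem_of_tendsto (tendsto_approx x)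
    (Eventually.of_forall fun n => (admissible_approx n).mem_stdSimplex x)
  apply_p i := tendsto_nhds_unique (tendsto_approx (p i)) <| by
    simp only [(admissible_approx _).apply_p]
    exact tendsto_const_nhds

lemma step_harmonicBasis : step harmonicBasis = harmonicBasis := by
  funext x
  have hstep : Tendsto (fun n => step (approx n) x) atTop (𝓝 (step harmonicBasis x)) := by
    unfold step
    split_ifs
    · exact (continuous_harmMatrix_mulVec _).continuousAt.tendsto.comp (tendsto_approx _)
    · exact tendsto_const_nhds
  simp only [← approx_succ] at hstep
  exact tendsto_nhds_unique hstep ((tendsto_add_atTop_iff_nat 1).2 (tendsto_approx x))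

lemma harmonicBasis_f (a : Fin 3) {z : ℂ} (hz : z ∈ triangle) :
    harmonicBasis (f a z) = harmMatrix a *ᵥ harmonicBasis z := by
  conv_lhs => rw [← step_harmonicBasis]
  exact step_f admissible_harmonicBasis.apply_p a hz

lemma harmonicBasis_fwl_midpoint (w : List (Fin 3)) {i j : Fin 3} (hij : i ≠ j) :
    harmonicBasis (fwl w ((p i + p j) / 2)) =
      (1/5 : ℝ) • ((2 : ℝ) • harmonicBasis (fwl w (p i)) +
        (2 : ℝ) • harmonicBasis (fwl w (p j)) + harmonicBasis (fwl w (p (other i j)))) := by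
  rw [p_add_p_div_two]
  induction w with
  | nil =>
    simp only [fwl, id]
    rw [harmonicBasis_f i (p_mem_triangle j)]
    simp only [admissible_harmonicBasis.apply_p]
    exact harmMatrix_mulVec_single_of_ne hij
  | cons a w ih =>
    have hmem (z : ℂ) (hz : z ∈ triangle) := harmonicBasis_f a (fwl_mem_triangle w hz)
    simp only [fwl, Function.comp_apply]
    rw [hmem _ (f_mem_triangle i (p_mem_triangle j)), hmem _ (p_mem_triangle i),
      hmem _ (p_mem_triangle j), hmem _ (p_mem_triangle _), ih]
    simp only [mulVec_smul, mulVec_add]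

section Gasket

variable {K : Set ℂ} (hK : IsSG K)
include hK

lemma continuousOn_step {L : ℂ → Fin 3 → ℝ} (hL : ∀ i, L (p i) = Pi.single i 1)
    (hc : ContinuousOn L K) : ContinuousOn (step L) K := by
  rw [hK.eq_iUnion]
  refine (locallyFinite_of_finite _).continuousOn_iUnion
    (fun a => (hK.2.1.image (continuous_f a)).isClosed) fun a => ?_
  have hmaps : MapsTo (fInv a) (f a '' K) K := by
    rintro _ ⟨z, hz, rfl⟩
    rwa [fInv_f]
  refine ((continuous_harmMatrix_mulVec a).comp_continuousOn
    (hc.comp (continuous_fInv a).continuousOn hmaps)).congr ?_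
  rintro _ ⟨z, hz, rfl⟩
  simp only [Function.comp_apply, fInv_f]
  exact step_f hL a (hK.subset_triangle hz)

lemma continuousOn_approx (n : ℕ) : ContinuousOn (approx n) K := by
  induction n with
  | zero =>
    exact continuous_bary.continuousOn.congr fun x hx =>
      approx_zero_of_mem (hK.subset_triangle hx)
  | succ n ih =>
    rw [approx_succ]
    exact continuousOn_step hK (admissible_approx n).apply_p ih

lemma continuousOn_harmonicBasis : ContinuousOn harmonicBasis K :=
  tendstoUniformly_approx.tendstoUniformlyOn.continuousOn
    (Frequently.of_forall (continuousOn_approx hK))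

lemma eq_p_of_harmonicBasis_eq_single {a : Fin 3} {z : ℂ} (hz : z ∈ K)
    (h : harmonicBasis z = Pi.single a 1) : z = p a := by
  refine eq_of_forall_dist_doubling (hK.2.1.isBounded.insert (p a))
    (R := fun z q => z ∈ K ∧ q = p a ∧ harmonicBasis z = Pi.single a 1) ?_ ?_ ⟨hz, rfl, h⟩
  · rintro z _ ⟨hz, rfl, -⟩
    exact ⟨mem_insert_of_mem _ hz, mem_insert _ _⟩
  rintro _ _ ⟨hz, rfl, hzH⟩ -
  obtain ⟨c, w, hw, rfl⟩ := mem_iUnion.1 (hK.eq_iUnion.subset hz)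
  rw [harmonicBasis_f c (hK.subset_triangle hw), ← harmMatrix_mulVec_single_self a] at hzH
  rcases eq_or_ne c a with rfl | hca
  · refine ⟨w, p c, ⟨hw, rfl, harmMatrix_mulVec_injective c hzH⟩, ?_⟩
    have hd := dist_f c w (p c)
    rw [f_p_self] at hd
    linarith
  · have hsingle := eq_single_of_harmMatrix_mulVec_eq hca
      (admissible_harmonicBasis.mem_stdSimplex w) (single_mem_stdSimplex ℝ a) hzH
    simpa [Pi.single_apply, hca] using congrFun hsingle a

lemma injOn_harmonicBasis : InjOn harmonicBasis K := by
  intro x hx y hy hxy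
  refine eq_of_forall_dist_doubling hK.2.1.isBounded
    (R := fun x y => x ∈ K ∧ y ∈ K ∧ harmonicBasis x = harmonicBasis y)
    (fun x y h => ⟨h.1, h.2.1⟩) ?_ ⟨hx, hy, hxy⟩
  rintro _ _ ⟨hx, hy, hxy⟩ hne
  obtain ⟨a, x', hx', rfl⟩ := mem_iUnion.1 (hK.eq_iUnion.subset hx)
  obtain ⟨b, y', hy', rfl⟩ := mem_iUnion.1 (hK.eq_iUnion.subset hy)
  have hx'Δ := admissible_harmonicBasis.mem_stdSimplex x'
  have hy'Δ := admissible_harmonicBasis.mem_stdSimplex y'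
  rw [harmonicBasis_f a (hK.subset_triangle hx'), harmonicBasis_f b (hK.subset_triangle hy')]
    at hxy
  rcases eq_or_ne a b with rfl | hab
  · refine ⟨x', y', ⟨hx', hy', harmMatrix_mulVec_injective a hxy⟩, ?_⟩
    rw [dist_f]
    linarith
  · have hx'p := eq_p_of_harmonicBasis_eq_single hK hx'
      (eq_single_of_harmMatrix_mulVec_eq hab.symm hy'Δ hx'Δ hxy.symm)
    have hy'p := eq_p_of_harmonicBasis_eq_single hK hy'
      (eq_single_of_harmMatrix_mulVec_eq hab hx'Δ hy'Δ hxy)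
    refine absurd ?_ hne
    rw [hx'p, hy'p, ← p_add_p_div_two, ← p_add_p_div_two, add_comm]

lemma isHarm_harmonicBasis (k : Fin 3) :
    IsHarm K (harmonicBasis (p 0) k) (harmonicBasis (p 1) k) (harmonicBasis (p 2) k)
      (harmonicBasis · k) := by
  refine ⟨(continuous_apply k).comp_continuousOn (continuousOn_harmonicBasis hK), rfl, rfl, rfl,
    fun w i j hij => ?_⟩
  beta_reduce
  rw [harmonicBasis_fwl_midpoint w hij]
  simp only [Pi.smul_apply, Pi.add_apply, smul_eq_mul]
  ring

end Gasket

theorem statement8 (K : Set ℂ) (hK : IsSG K) :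
    ∀ x ∈ K, ∀ y ∈ K, x ≠ y →
      ∃ (x0 x1 x2 : ℝ) (U : ℂ → ℝ), IsHarm K x0 x1 x2 U ∧ U x ≠ U y := by
  intro x hx y hy hxy
  obtain ⟨k, hk⟩ := Function.ne_iff.1 ((injOn_harmonicBasis hK).ne hx hy hxy)
  exact ⟨_, _, _, _, isHarm_harmonicBasis hK k, hk⟩

end SG
end
end
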